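/- Let α > 0 and let f : ℂ → ℂ be an entire function with Taylor expansion f(z) = Σ_{n=0}^∞ c_n z^n at 0. Then the following are equivalent: (i) for every t > 0, sup_{z∈ℂ} |f(z)| · exp(−t·|z|^α) < ∞ (i.e., f is of order at most α and minimal type); (ii) for every l ∈ ℕ, Σ_{n=0}^∞ (n!)^{1/α} · 2^{l·n} · |c_n| < ∞. -/

import Mathlib

/-!
For `y ≥ 0` the exponential series gives `(y ^ α) ^ n ≤ n! * exp (y ^ α)`, i.e.
`y ^ n ≤ (n!) ^ (1 / α) * exp (y ^ α / α)`. With `y = ‖z‖ / 2 ^ l` this bounds `‖f z‖` by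
`(∑ (n!) ^ (1 / α) 2 ^ (l n) ‖c n‖) * exp (t ‖z‖ ^ α)` for `t = 1 / (α 2 ^ (l α))`, which is
as small as we like. Conversely, Cauchy's estimate on the circle of radius
`r = (n / (t α)) ^ (1 / α)`, where `exp (t r ^ α) / r ^ n` is minimal, together with
`n! ≤ n ^ n`, gives `(n!) ^ (1 / α) ‖c n‖ ≤ C ((e α t) ^ (1 / α)) ^ n`, and this beats
`2 ^ (-l n)` for small `t`.
-/

open Real Set Metric Nat

theorem pow_le_factorial_rpow_mul_exp {α y : ℝ} (hα : 0 < α) (hy : 0 ≤ y) (n : ℕ) :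
    y ^ n ≤ (n ! : ℝ) ^ (1 / α) * exp (y ^ α / α) := by
  have hpow : (y ^ α) ^ n ≤ n ! * exp (y ^ α) :=
    (div_le_iff₀' (by positivity)).1 (pow_div_factorial_le_exp _ (by positivity) n)
  calc y ^ n = ((y ^ α) ^ n) ^ (1 / α) := by
        rw [rpow_pow_comm hy, one_div, rpow_rpow_inv (by positivity) hα.ne']
    _ ≤ (n ! * exp (y ^ α)) ^ (1 / α) := by gcongr
    _ = (n ! : ℝ) ^ (1 / α) * exp (y ^ α / α) := by
        rw [mul_rpow (by positivity) (exp_pos _).le, ← exp_mul, mul_one_div]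

theorem pow_le_factorial_rpow_mul_pow_mul_exp {α a R : ℝ} (hα : 0 < α) (ha : 0 < a)
    (hR : 0 ≤ R) (n : ℕ) :
    R ^ n ≤ (n ! : ℝ) ^ (1 / α) * a ^ n * exp (R ^ α / (α * a ^ α)) := by
  calc R ^ n = (R / a) ^ n * a ^ n := by rw [div_pow, div_mul_cancel₀ _ (by positivity)]
    _ ≤ (n ! : ℝ) ^ (1 / α) * exp ((R / a) ^ α / α) * a ^ n := by
        gcongr; exact pow_le_factorial_rpow_mul_exp hα (by positivity) n
    _ = (n ! : ℝ) ^ (1 / α) * a ^ n * exp (R ^ α / (α * a ^ α)) := by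
        rw [div_rpow hR ha.le, div_div, mul_comm (a ^ α)]; ring

theorem factorial_rpow_mul_exp_le {α t : ℝ} (hα : 0 < α) (ht : 0 < t) (n : ℕ) :
    (n ! : ℝ) ^ (1 / α) * exp (t * ((n / (t * α)) ^ (1 / α)) ^ α) ≤
      ((n / (t * α)) ^ (1 / α)) ^ n * ((exp 1 * α * t) ^ (1 / α)) ^ n := by
  have hexp : t * ((n / (t * α)) ^ (1 / α)) ^ α = n * (1 / α) := by
    rw [one_div, rpow_inv_rpow (by positivity) hα.ne']; field_simp
  calc (n ! : ℝ) ^ (1 / α) * exp (t * ((n / (t * α)) ^ (1 / α)) ^ α)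
      = (n ! * exp n) ^ (1 / α) := by
        rw [hexp, exp_mul, mul_rpow (by positivity) (exp_pos _).le]
    _ ≤ ((n : ℝ) ^ n * exp n) ^ (1 / α) := by gcongr; exact_mod_cast factorial_le_pow n
    _ = ((n / (t * α)) ^ (1 / α)) ^ n * ((exp 1 * α * t) ^ (1 / α)) ^ n := by
        rw [← mul_pow, ← mul_rpow (by positivity) (by positivity), rpow_pow_comm (by positivity),
          ← exp_one_pow, ← mul_pow]
        congr 2
        field_simp

theorem exists_pos_rpow_lt {α ε : ℝ} (hα : 0 < α) (hε : 0 < ε) :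
    ∃ t > 0, (exp 1 * α * t) ^ (1 / α) < ε := by
  refine ⟨(ε / 2) ^ α / (exp 1 * α), by positivity, ?_⟩
  rw [mul_div_cancel₀ _ (by positivity), one_div, rpow_rpow_inv (by positivity) hα.ne']
  linarith

theorem exists_two_pow_rpow_ge {α t : ℝ} (hα : 0 < α) (ht : 0 < t) :
    ∃ l : ℕ, 1 / (α * ((2 : ℝ) ^ l) ^ α) ≤ t := by
  obtain ⟨l, hl⟩ := pow_unbounded_of_one_lt (1 / (α * t)) (one_lt_rpow one_lt_two hα)
  rw [rpow_pow_comm zero_le_two, div_lt_iff₀ (by positivity)] at hl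
  refine ⟨l, (div_le_iff₀ (by positivity)).2 ?_⟩
  nlinarith

theorem bddAbove_range_mul_exp_neg_iff {X : Type*} (g h : X → ℝ) (t : ℝ) :
    BddAbove (range fun x => g x * exp (-t * h x)) ↔ ∃ C, ∀ x, g x ≤ C * exp (t * h x) := by
  simp only [bddAbove_def, forall_mem_range, neg_mul, exp_neg, ← div_eq_mul_inv,
    div_le_iff₀ (exp_pos _)]

section PowerSeries

variable {f : ℂ → ℂ} {c : ℕ → ℂ} {α : ℝ}

theorem hasFPowerSeriesOnBall_ofScalars_of_hasSum
    (hc : ∀ z : ℂ, HasSum (fun n : ℕ => c n * z ^ n) (f z)) :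
    HasFPowerSeriesOnBall f (FormalMultilinearSeries.ofScalars ℂ c) 0 ⊤ where
  r_le := (ENNReal.eq_top_of_forall_nnreal_le fun r =>
    (FormalMultilinearSeries.ofScalars ℂ c).le_radius_of_tendsto (l := 0) <| by
      simpa [FormalMultilinearSeries.ofScalars_norm] using
        (hc (r : ℂ)).summable.tendsto_atTop_zero.norm).ge
  r_pos := ENNReal.zero_lt_top
  hasSum {y} _ := by
    simpa only [FormalMultilinearSeries.ofScalars_apply_eq, smul_eq_mul, zero_add] using hc y

theorem norm_coeff_mul_pow_le_of_forall_mem_sphere_norm_le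
    (hc : ∀ z : ℂ, HasSum (fun n : ℕ => c n * z ^ n) (f z))
    {r M : ℝ} (hr : 0 ≤ r) (hM : ∀ z ∈ sphere (0 : ℂ) r, ‖f z‖ ≤ M) (n : ℕ) :
    ‖c n‖ * r ^ n ≤ M := by
  have hp := hasFPowerSeriesOnBall_ofScalars_of_hasSum hc
  rcases hr.eq_or_lt with rfl | hr
  · have hf0 : ‖f 0‖ ≤ M := hM 0 (by simp)
    rcases n with _ | n
    · have hc0 := hp.coeff_zero fun _ => 1
      simp only [FormalMultilinearSeries.ofScalars_apply_eq, pow_zero, smul_eq_mul,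
        mul_one] at hc0
      simpa [hc0] using hf0
    · simpa using (norm_nonneg _).trans hf0
  · have hd : Differentiable ℂ f := fun z => (hp.analyticAt_of_mem (by simp)).differentiableAt
    have hderiv : iteratedDeriv n f 0 = n ! * c n := by
      simpa [iteratedDeriv_eq_iteratedFDeriv, FormalMultilinearSeries.ofScalars_apply_eq]
        using (hp.factorial_smul 1 n).symm
    have hcauchy := Complex.norm_iteratedDeriv_le_of_forall_mem_sphere_norm_le n hr
      hd.diffContOnCl hM
    rw [hderiv, norm_mul, Complex.norm_natCast, mul_div_assoc,
      mul_le_mul_iff_right₀ (by positivity), le_div_iff₀ (by positivity)] at hcauchy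
    exact hcauchy

theorem factorial_rpow_mul_norm_coeff_le (hα : 0 < α)
    (hc : ∀ z : ℂ, HasSum (fun n : ℕ => c n * z ^ n) (f z)) {t C : ℝ} (ht : 0 < t)
    (hf : ∀ z, ‖f z‖ ≤ C * exp (t * ‖z‖ ^ α)) (n : ℕ) :
    (n ! : ℝ) ^ (1 / α) * ‖c n‖ ≤ C * ((exp 1 * α * t) ^ (1 / α)) ^ n := by
  have hC : 0 ≤ C := nonneg_of_mul_nonneg_left ((norm_nonneg _).trans (hf 0)) (exp_pos _)
  set r : ℝ := (n / (t * α)) ^ (1 / α)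
  have hr : 0 ≤ r := by positivity
  have hrn : 0 < r ^ n := by
    rcases n.eq_zero_or_pos with rfl | hn
    · simp
    · exact pow_pos (rpow_pos_of_pos (by positivity) _) n
  have hcauchy : ‖c n‖ * r ^ n ≤ C * exp (t * r ^ α) :=
    norm_coeff_mul_pow_le_of_forall_mem_sphere_norm_le hc hr
      (fun z hz => mem_sphere_zero_iff_norm.1 hz ▸ hf z) n
  refine le_of_mul_le_mul_right ?_ hrn
  calc (n ! : ℝ) ^ (1 / α) * ‖c n‖ * r ^ n
      ≤ (n ! : ℝ) ^ (1 / α) * (C * exp (t * r ^ α)) := by rw [mul_assoc]; gcongr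
    _ = C * ((n ! : ℝ) ^ (1 / α) * exp (t * r ^ α)) := by ring
    _ ≤ C * (r ^ n * ((exp 1 * α * t) ^ (1 / α)) ^ n) :=
        mul_le_mul_of_nonneg_left (factorial_rpow_mul_exp_le hα ht n) hC
    _ = C * ((exp 1 * α * t) ^ (1 / α)) ^ n * r ^ n := by ring

theorem norm_le_tsum_mul_exp (hα : 0 < α)
    (hc : ∀ z : ℂ, HasSum (fun n : ℕ => c n * z ^ n) (f z)) {a : ℝ} (ha : 0 < a)
    (hs : Summable fun n => (n ! : ℝ) ^ (1 / α) * a ^ n * ‖c n‖) (z : ℂ) :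
    ‖f z‖ ≤ (∑' n, (n ! : ℝ) ^ (1 / α) * a ^ n * ‖c n‖) * exp (‖z‖ ^ α / (α * a ^ α)) := by
  refine (hc z).norm_le_of_bounded (hs.hasSum.mul_right _) fun n => ?_
  rw [norm_mul, norm_pow, mul_comm ‖c n‖, mul_right_comm]
  gcongr
  exact pow_le_factorial_rpow_mul_pow_mul_exp hα ha (norm_nonneg z) n

end PowerSeries

/-- One-dimensional case of Theorem 2.12: an entire function is of order at
most `α` and minimal type iff all weighted ℓ¹-norms of its Taylor
coefficients are finite. -/
theorem minimal_type_iff_weighted_coeff_summable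
    (α : ℝ) (hα : 0 < α) (f : ℂ → ℂ) (c : ℕ → ℂ)
    (hc : ∀ z : ℂ, HasSum (fun n : ℕ => c n * z ^ n) (f z)) :
    (∀ t : ℝ, 0 < t → BddAbove (Set.range fun z : ℂ =>
        ‖f z‖ * Real.exp (-t * ‖z‖ ^ α))) ↔
      (∀ l : ℕ, Summable fun n : ℕ =>
        (n.factorial : ℝ) ^ (1 / α) * 2 ^ (l * n) * ‖c n‖) := by
  simp only [bddAbove_range_mul_exp_neg_iff, pow_mul]
  constructor
  · intro hbound l
    obtain ⟨t, ht, hq_lt⟩ := exists_pos_rpow_lt hα (inv_pos.2 (pow_pos two_pos l))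
    obtain ⟨C, hC⟩ := hbound t ht
    set q := (exp 1 * α * t) ^ (1 / α)
    have hq : 2 ^ l * q < 1 :=
      (mul_lt_mul_of_pos_left hq_lt (by positivity)).trans_eq (mul_inv_cancel₀ (by positivity))
    refine .of_nonneg_of_le (fun n => by positivity) (fun n => ?_)
      ((summable_geometric_of_lt_one (by positivity) hq).mul_left C)
    calc (n ! : ℝ) ^ (1 / α) * (2 ^ l) ^ n * ‖c n‖
        = (2 ^ l) ^ n * ((n ! : ℝ) ^ (1 / α) * ‖c n‖) := by ring
      _ ≤ (2 ^ l) ^ n * (C * q ^ n) :=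
        mul_le_mul_of_nonneg_left (factorial_rpow_mul_norm_coeff_le hα hc ht hC n)
          (by positivity)
      _ = C * (2 ^ l * q) ^ n := by ring
  · intro hs t ht
    obtain ⟨l, hl⟩ := exists_two_pow_rpow_ge hα ht
    refine ⟨∑' n, (n ! : ℝ) ^ (1 / α) * (2 ^ l) ^ n * ‖c n‖, fun z =>
      (norm_le_tsum_mul_exp hα hc (by positivity) (hs l) z).trans ?_⟩
    gcongr
    calc ‖z‖ ^ α / (α * ((2 : ℝ) ^ l) ^ α)
        = 1 / (α * ((2 : ℝ) ^ l) ^ α) * ‖z‖ ^ α := by ring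
      _ ≤ t * ‖z‖ ^ α := by gcongr
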